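/- arXiv:2410.10420 — 2 statements merged into one kernel-verified Lean document; each statement's English description precedes it below -/
import Mathlib

section
/- In the plane, take p = (0, −1) on the unit circle, a, b ≥ 0 and h > 0. Let p¹ = (ah, −1), and p² = p¹ + (bh/√(1+(ah)²))·(1, ah) (a step of size bh orthogonal to p¹). Then the midpoint p^{n+1} = (p + p²)/2 satisfies ‖p^{n+1}‖² = (1 + (a−b)²h²/8 + O(h⁴))², i.e., ‖p^{n+1}‖ = 1 + (a−b)²h²/8 + O(h⁴). In particular, if |a − b| ≤ K h for some constant K, then ‖p^{n+1}‖ = 1 + O(h⁴). -/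
set_option maxHeartbeats 2000000 in
/-- One TVDRK2 (Heun) step on the unit circle starting from p = (0, -1):
first Euler step with tangential speed `a`, second Euler step of size `b h`
orthogonal to the ray through `p¹`, followed by averaging.  If `|a - b| ≤ K h`
(and `a, b` stay bounded), the norm of the result is `1 + O(h⁴)`. -/
theorem stmt_3 (K A : ℝ) (hK : 0 ≤ K) (hA : 0 ≤ A) :
    ∃ C : ℝ, 0 < C ∧ ∀ h a b : ℝ, 0 < h → h ≤ 1 →
      0 ≤ a → a ≤ A → 0 ≤ b → b ≤ A → |a - b| ≤ K * h →
      |Real.sqrt ((a * h / 2 + b * h / (2 * Real.sqrt (1 + (a * h) ^ 2))) ^ 2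
          + (-1 + a * b * h ^ 2 / (2 * Real.sqrt (1 + (a * h) ^ 2))) ^ 2) - 1|
        ≤ C * h ^ 4 := by
  refine ⟨(K + A^3/2)^2/4 + A^4/4 + 1, by positivity, ?_⟩
  intro h a b hh hh1 ha haA hb hbA hab
  set s := Real.sqrt (1 + (a * h) ^ 2) with hs
  have hsq : s^2 = 1 + (a*h)^2 := hs ▸ Real.sq_sqrt (by positivity)
  have hsnn : 0 ≤ s := hs ▸ Real.sqrt_nonneg _
  clear_value s
  have hs1 : 1 ≤ s := by nlinarith [sq_nonneg (a*h)]
  have hs0 : 0 < s := lt_of_lt_of_le one_pos hs1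
  have hs2 : s ≤ 1 + (a*h)^2/2 := by nlinarith [sq_nonneg (a*h)]
  have hEeq : (a * h / 2 + b * h / (2 * s)) ^ 2
      + (-1 + a * b * h ^ 2 / (2 * s)) ^ 2
      = 1 + h^2/4 * (a - b/s)^2 + a^2*b^2*h^4/(4*s^2) := by
    field_simp
    ring_nf
  rw [hEeq]; clear hEeq
  have ha2 : a^2 ≤ A^2 := by nlinarith
  have hb2 : b^2 ≤ A^2 := by nlinarith
  have habs : |a - b/s| ≤ K*h + A^3*h^2/2 := by
    have h1 : a - b/s = (a - b) + b*(s-1)/s := by field_simp; ring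
    have h2 : 0 ≤ b*(s-1)/s := div_nonneg (mul_nonneg hb (by linarith)) hsnn
    have h3 : b*(s-1)/s ≤ A^3*h^2/2 := by
      have h3a : b*(s-1)/s ≤ b*(s-1) := by
        rw [div_le_iff₀ hs0]
        exact le_mul_of_one_le_right (mul_nonneg hb (by linarith)) hs1
      have h3b : b*(s-1) ≤ A*((a*h)^2/2) :=
        mul_le_mul hbA (by linarith) (by linarith) hA
      have h3c : A*((a*h)^2/2) ≤ A^3*h^2/2 := by
        nlinarith [mul_nonneg (mul_nonneg hA (sub_nonneg.mpr ha2)) (sq_nonneg h)]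
      linarith
    rw [h1]
    calc |(a-b) + b*(s-1)/s| ≤ |a-b| + |b*(s-1)/s| := abs_add_le _ _
      _ ≤ K*h + A^3*h^2/2 := by rw [abs_of_nonneg h2]; linarith
  have hterm1 : h^2/4 * (a - b/s)^2 ≤ ((K + A^3/2)^2/4) * h^4 := by
    have h5 : (a - b/s)^2 ≤ (K*h + A^3*h^2/2)^2 :=
      sq_le_sq' (by linarith [neg_abs_le (a - b/s)]) (le_trans (le_abs_self _) habs)
    have h6a : K*h + A^3*h^2/2 ≤ (K + A^3/2)*h := by
      nlinarith [mul_nonneg (pow_nonneg hA 3) (mul_nonneg hh.le (by linarith : (0:ℝ) ≤ 1 - h))]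
    have h6 : (K*h + A^3*h^2/2)^2 ≤ ((K + A^3/2)*h)^2 :=
      pow_le_pow_left₀ (by positivity) h6a 2
    calc h^2/4 * (a - b/s)^2 ≤ h^2/4 * ((K + A^3/2)*h)^2 :=
          mul_le_mul_of_nonneg_left (h5.trans h6) (by positivity)
      _ = ((K + A^3/2)^2/4) * h^4 := by ring
  have hterm2 : a^2*b^2*h^4/(4*s^2) ≤ A^4/4 * h^4 := by
    have h7 : a^2*b^2*h^4/(4*s^2) ≤ a^2*b^2*h^4/4 :=
      div_le_div_of_nonneg_left (by positivity) (by norm_num)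
        (by nlinarith [sq_nonneg (a*h)])
    have h8 : a^2*b^2 ≤ A^4 := by nlinarith [mul_le_mul ha2 hb2 (sq_nonneg b) (sq_nonneg A)]
    calc a^2*b^2*h^4/(4*s^2) ≤ a^2*b^2*h^4/4 := h7
      _ = a^2*b^2*(h^4/4) := by ring
      _ ≤ A^4*(h^4/4) := mul_le_mul_of_nonneg_right h8 (by positivity)
      _ = A^4/4 * h^4 := by ring
  have hX : 0 ≤ h^2/4 * (a - b/s)^2 := by positivity
  have hY : 0 ≤ a^2*b^2*h^4/(4*s^2) := div_nonneg (by positivity) (by positivity)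
  set E := 1 + h^2/4 * (a - b/s)^2 + a^2*b^2*h^4/(4*s^2) with hE
  have hE1 : 1 ≤ E := by rw [hE]; linarith
  have hEb : E - 1 ≤ ((K + A^3/2)^2/4 + A^4/4) * h^4 := by rw [hE]; linarith
  clear_value E
  have hsE2 : (Real.sqrt E)^2 = E := Real.sq_sqrt (by linarith)
  have hsE : 1 ≤ Real.sqrt E := by nlinarith [Real.sqrt_nonneg E]
  rw [abs_of_nonneg (by linarith)]
  have hle : Real.sqrt E - 1 ≤ E - 1 := by nlinarith [Real.sqrt_nonneg E]
  nlinarith [pow_pos hh 4]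
end

section
/- Let g(h) = 1 + arctan(h). The PTVDRK2' update factor for θ' = θ at θⁿ = 1 is approximated by (1 + g(h)²)/2, and (1 + g(h)²)/2 = 1 + h + h²/2 − h³/3 + O(h⁴). Consequently e^h − (1 + g(h)²)/2 = h³/2 + O(h⁴) ≠ O(h⁴) ... i.e., the scheme's local error is exactly third order (global second order), since the h³ coefficient −1/3 differs from the exact 1/6. -/
/-!
With `arctan h = h - h³/3 + O(h⁵)` we get
`(1 + (1 + arctan h)²)/2 = 1 + h + h²/2 - h³/3 + O(h⁴)`, while
`exp h = 1 + h + h²/2 + h³/6 + O(h⁴)`; the cubic coefficients differ by `1/2`.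
The arctan remainder is bounded by the mean value theorem, since
`(arctan t - (t - t³/3))' = t⁴/(1 + t²) ≤ t⁴`, and the exponential one by `Real.exp_bound`.
-/

open Real

/-- Leading-order PTVDRK2' update factor for `θ' = θ` at `θ = 1`. -/
noncomputable def ptvdrk2Factor (h : ℝ) : ℝ := (1 + (1 + arctan h) ^ 2) / 2

lemma hasDerivAt_arctan_sub_cubic (x : ℝ) :
    HasDerivAt (fun t => arctan t - (t - t ^ 3 / 3)) (x ^ 4 / (1 + x ^ 2)) x := by
  refine ((hasDerivAt_arctan x).sub
    ((hasDerivAt_id' x).sub ((hasDerivAt_pow 3 x).div_const 3))).congr_deriv ?_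
  field_simp
  ring

lemma abs_arctan_sub_cubic_le (x : ℝ) : |arctan x - (x - x ^ 3 / 3)| ≤ |x| ^ 5 := by
  have hderiv_le : ∀ t ∈ Set.Icc (-|x|) |x|, ‖t ^ 4 / (1 + t ^ 2)‖ ≤ |x| ^ 4 := by
    intro t ht
    rw [Real.norm_eq_abs, abs_div, abs_of_pos (by positivity : (0:ℝ) < 1 + t ^ 2),
      div_le_iff₀ (by positivity), ← pow_abs]
    have : |t| ^ 4 ≤ |x| ^ 4 := pow_le_pow_left₀ (abs_nonneg t) (abs_le.mpr ht) 4
    nlinarith [pow_nonneg (abs_nonneg x) 4, sq_nonneg t]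
  have hmvt := (convex_Icc (-|x|) |x|).norm_image_sub_le_of_norm_hasDerivWithin_le
    (fun t _ => (hasDerivAt_arctan_sub_cubic t).hasDerivWithinAt) hderiv_le
    (x := 0) (y := x) (by simp) (abs_le.mp le_rfl)
  simpa [pow_succ] using hmvt

lemma abs_exp_sub_cubic_le {x : ℝ} (hx : |x| ≤ 1) :
    |exp x - (1 + x + x ^ 2 / 2 + x ^ 3 / 6)| ≤ x ^ 4 / 16 := by
  have h := Real.exp_bound hx (n := 4) (by norm_num)
  norm_num [Finset.sum_range_succ, Nat.factorial, (by decide : Even 4).pow_abs] at h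
  linarith [pow_nonneg (sq_nonneg x) 2]

lemma exp_sub_ptvdrk2Factor_sub_cube_eq (h : ℝ) :
    exp h - ptvdrk2Factor h - h ^ 3 / 2 =
      (exp h - (1 + h + h ^ 2 / 2 + h ^ 3 / 6)) + (h ^ 4 / 3 - h ^ 6 / 18)
        - (arctan h - (h - h ^ 3 / 3)) *
          (1 + (h - h ^ 3 / 3) + (arctan h - (h - h ^ 3 / 3)) / 2) := by
  unfold ptvdrk2Factor
  ring

lemma abs_exp_sub_ptvdrk2Factor_sub_cube_le {h : ℝ} (hh : |h| ≤ 1) :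
    |exp h - ptvdrk2Factor h - h ^ 3 / 2| ≤ 4 * h ^ 4 := by
  set p := h - h ^ 3 / 3
  set r := arctan h - p
  have habs4 : |h| ^ 4 = h ^ 4 := (by decide : Even 4).pow_abs h
  have hpow_le : ∀ n ≥ 4, |h| ^ n ≤ h ^ 4 := fun n hn =>
    habs4 ▸ pow_le_pow_of_le_one (abs_nonneg h) hh hn
  have hr : |r| ≤ h ^ 4 := (abs_arctan_sub_cubic_le h).trans (hpow_le 5 (by norm_num))
  have hp : |p| ≤ 4 / 3 := by
    have : |h| ^ 3 ≤ 1 := pow_le_one₀ (abs_nonneg h) hh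
    calc |p| ≤ |h| + |h ^ 3 / 3| := abs_sub _ _
      _ = |h| + |h| ^ 3 / 3 := by rw [abs_div, abs_pow, abs_of_pos (three_pos : (0:ℝ) < 3)]
      _ ≤ 4 / 3 := by linarith
  have hfactor : |1 + p + r / 2| ≤ 3 := by
    have : h ^ 4 ≤ 1 := habs4 ▸ pow_le_one₀ (abs_nonneg h) hh
    calc |1 + p + r / 2| ≤ |1| + |p| + |r / 2| := abs_add_three _ _ _
      _ = 1 + |p| + |r| / 2 := by rw [abs_one, abs_div, abs_two]
      _ ≤ 3 := by linarith
  have hquartic : |h ^ 4 / 3 - h ^ 6 / 18| ≤ h ^ 4 / 3 := by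
    have h6 : h ^ 6 ≤ h ^ 4 := (Even.pow_abs ⟨3, rfl⟩ h) ▸ hpow_le 6 (by norm_num)
    rw [abs_le]
    constructor <;> nlinarith [pow_nonneg (sq_nonneg h) 3]
  rw [exp_sub_ptvdrk2Factor_sub_cube_eq]
  calc _ ≤ |exp h - (1 + h + h ^ 2 / 2 + h ^ 3 / 6)| + |h ^ 4 / 3 - h ^ 6 / 18|
        + |r| * |1 + p + r / 2| := by
          rw [← abs_mul]; exact (abs_sub _ _).trans (by gcongr; exact abs_add_le _ _)
    _ ≤ h ^ 4 / 16 + h ^ 4 / 3 + h ^ 4 * 3 := by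
          gcongr
          exact abs_exp_sub_cubic_le hh
    _ ≤ 4 * h ^ 4 := by nlinarith [pow_nonneg (sq_nonneg h) 2]

theorem stmt_14 :
    ∃ C > (0:ℝ), ∃ δ > (0:ℝ), ∀ h : ℝ, |h| ≤ δ →
      |Real.exp h - (1 + (1 + Real.arctan h) ^ 2) / 2 - h ^ 3 / 2| ≤ C * h ^ 4 :=
  ⟨4, by norm_num, 1, one_pos, fun _ hh => abs_exp_sub_ptvdrk2Factor_sub_cube_le hh⟩
end
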